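/- Let σ > 0, d ≥ 1 an integer, and a, b, c reals with a, b > 0 and δ·a² > c² + b² for some 1/4 < δ ≤ 1. Set ā = √(c²+b²) and b̄ = a·b/ā. If b/(2σ) ≥ r(√(2π)/(2d)), where r(α) is the unique nonnegative zero of f(ζ,α) = (1−ζ²)(α + ∫₀^ζ e^{−t²/2} dt) − ζ e^{−ζ²/2}, then [1/(d+1) + (d/(d+1))φ_σ(a)]·[1/(d+1) + (d/(d+1))φ_σ(b)] ≤ [1/(d+1) + (d/(d+1))φ_σ(ā)]·[1/(d+1) + (d/(d+1))φ_σ(b̄)], with equality if and only if c = 0. -/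

import Mathlib

/-!
Up to a positive factor, `1 / (d + 1) + d / (d + 1) * phi σ x` is `G (x / (2σ))`, where
`G ζ = α + ∫₀^ζ e^{-t²/2}` and `α = √(2π) / (2d)`. With `s = b/(2σ)`, `t = a/(2σ)`,
`u = ā/(2σ)`, `v = b̄/(2σ)` we have `s < u, v < t` and `u * v = s * t` when `c ≠ 0`, and the claim
becomes `G s * G t < G u * G v`. This holds because `x ↦ log G (eˣ)` is strictly concave where
`eˣ ≥ r(α)`: its derivative is the elasticity `ζ G'(ζ) / G(ζ)` at `ζ = eˣ`, whose own derivative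
`e^{-ζ²/2} f(ζ, α) / G(ζ)²` is negative beyond the zero `r(α)` of `f`, since `∂f/∂ζ = -2ζ G(ζ) < 0`.
-/

noncomputable def phi (σ ζ : ℝ) : ℝ :=
  (2 / Real.sqrt (2 * Real.pi)) * ∫ t in (0:ℝ)..(ζ / (2 * σ)), Real.exp (-t ^ 2 / 2)

noncomputable def f (ζ α : ℝ) : ℝ :=
  (1 - ζ ^ 2) * (α + ∫ t in (0:ℝ)..ζ, Real.exp (-t ^ 2 / 2)) - ζ * Real.exp (-ζ ^ 2 / 2)

open Real Set

theorem StrictConcaveOn.add_lt_add_of_add_eq {D : Set ℝ} {h : ℝ → ℝ} (hh : StrictConcaveOn ℝ D h)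
    {s t u v : ℝ} (hs : s ∈ D) (ht : t ∈ D) (hsu : s < u) (hut : u < t) (huv : u + v = s + t) :
    h s + h t < h u + h v := by
  obtain ⟨θ, hθ⟩ : ∃ θ, θ * (t - s) = t - u := ⟨_, div_mul_cancel₀ _ (by linarith)⟩
  have hθ₀ : 0 < θ := by nlinarith
  have hθ₁ : 0 < 1 - θ := by nlinarith
  have hu : θ * s + (1 - θ) * t = u := by linarith
  have hv : (1 - θ) * s + θ * t = v := by linarith
  have hst : s ≠ t := (hsu.trans hut).ne
  have h₁ := hh.2 hs ht hst hθ₀ hθ₁ (by ring)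
  have h₂ := hh.2 hs ht hst hθ₁ hθ₀ (by ring)
  simp only [smul_eq_mul, hu, hv] at h₁ h₂
  linarith

noncomputable def gaussInt (α ζ : ℝ) : ℝ := α + ∫ t in (0:ℝ)..ζ, exp (-t ^ 2 / 2)

lemma f_eq_gaussInt (ζ α : ℝ) : f ζ α = (1 - ζ ^ 2) * gaussInt α ζ - ζ * exp (-ζ ^ 2 / 2) := rfl

lemma hasDerivAt_gaussInt (α ζ : ℝ) : HasDerivAt (gaussInt α) (exp (-ζ ^ 2 / 2)) ζ := by
  have hc : Continuous fun t : ℝ => exp (-t ^ 2 / 2) := by fun_prop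
  exact ((intervalIntegral.integral_hasStrictDerivAt_right (hc.intervalIntegrable 0 ζ)
    (hc.stronglyMeasurableAtFilter _ _) hc.continuousAt).hasDerivAt).const_add α

lemma gaussInt_pos {α ζ : ℝ} (hα : 0 < α) (hζ : 0 ≤ ζ) : 0 < gaussInt α ζ := by
  have : 0 ≤ ∫ t in (0:ℝ)..ζ, exp (-t ^ 2 / 2) :=
    intervalIntegral.integral_nonneg hζ fun t _ => (exp_pos _).le
  unfold gaussInt
  linarith

lemma hasDerivAt_exp_neg_sq_div_two (ζ : ℝ) :
    HasDerivAt (fun z : ℝ => exp (-z ^ 2 / 2)) (-ζ * exp (-ζ ^ 2 / 2)) ζ := by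
  have h := ((hasDerivAt_pow 2 ζ).neg.div_const 2).exp
  exact h.congr_deriv (by simp only [Pi.neg_apply]; ring)

lemma hasDerivAt_f (α ζ : ℝ) : HasDerivAt (fun z => f z α) (-2 * ζ * gaussInt α ζ) ζ :=
  ((((hasDerivAt_pow 2 ζ).const_sub 1).mul (hasDerivAt_gaussInt α ζ)).sub
    ((hasDerivAt_id ζ).mul (hasDerivAt_exp_neg_sq_div_two ζ))).congr_deriv
      (by simp only [Nat.cast_ofNat, Nat.add_one_sub_one, pow_one, id_eq]; ring)

lemma f_neg_of_lt {α r ζ : ℝ} (hα : 0 < α) (hr : 0 ≤ r) (hfr : f r α = 0) (hrζ : r < ζ) :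
    f ζ α < 0 := by
  have hanti : StrictAntiOn (fun z => f z α) (Ici 0) := by
    refine strictAntiOn_of_deriv_neg (convex_Ici 0)
      (HasDerivAt.continuousOn fun z _ => hasDerivAt_f α z) fun z hz => ?_
    rw [interior_Ici] at hz
    rw [(hasDerivAt_f α z).deriv]
    nlinarith [mul_pos (mem_Ioi.1 hz) (gaussInt_pos hα (le_of_lt hz))]
  simpa [hfr] using hanti hr (hr.trans hrζ.le) hrζ

noncomputable def gaussIntElasticity (α ζ : ℝ) : ℝ := ζ * exp (-ζ ^ 2 / 2) / gaussInt α ζ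

lemma hasDerivAt_gaussIntElasticity {α ζ : ℝ} (hα : 0 < α) (hζ : 0 ≤ ζ) :
    HasDerivAt (gaussIntElasticity α) (exp (-ζ ^ 2 / 2) * f ζ α / gaussInt α ζ ^ 2) ζ := by
  have hG := gaussInt_pos hα hζ
  refine (((hasDerivAt_id ζ).mul (hasDerivAt_exp_neg_sq_div_two ζ)).div
    (hasDerivAt_gaussInt α ζ) hG.ne').congr_deriv ?_
  rw [f_eq_gaussInt]
  simp only [Pi.mul_apply, id_eq]
  field_simp
  ring

lemma gaussIntElasticity_strictAntiOn {α r : ℝ} (hα : 0 < α) (hr : 0 ≤ r) (hfr : f r α = 0) :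
    StrictAntiOn (gaussIntElasticity α) (Ici r) := by
  refine strictAntiOn_of_deriv_neg (convex_Ici r)
    (HasDerivAt.continuousOn fun z hz => hasDerivAt_gaussIntElasticity hα (hr.trans hz))
    fun z hz => ?_
  rw [interior_Ici] at hz
  have hz₀ : 0 ≤ z := hr.trans (le_of_lt hz)
  rw [(hasDerivAt_gaussIntElasticity hα hz₀).deriv]
  have := gaussInt_pos hα hz₀
  exact div_neg_of_neg_of_pos (mul_neg_of_pos_of_neg (exp_pos _) (f_neg_of_lt hα hr hfr hz))
    (by positivity)

lemma strictConcaveOn_log_gaussInt_exp {α r s : ℝ} (hα : 0 < α) (hr : 0 ≤ r) (hfr : f r α = 0)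
    (hrs : r ≤ s) (hs : 0 < s) :
    StrictConcaveOn ℝ (Ici (log s)) fun x => log (gaussInt α (exp x)) := by
  have hderiv (x : ℝ) : HasDerivAt (fun x => log (gaussInt α (exp x)))
      (gaussIntElasticity α (exp x)) x :=
    (((hasDerivAt_gaussInt α (exp x)).comp x (hasDerivAt_exp x)).log
      (gaussInt_pos hα (exp_pos x).le).ne').congr_deriv
      (by simp only [gaussIntElasticity, Function.comp_apply]; ring)
  refine StrictAntiOn.strictConcaveOn_of_deriv (convex_Ici _)
    (HasDerivAt.continuousOn fun x _ => hderiv x) fun x hx y hy hxy => ?_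
  rw [interior_Ici] at hx hy
  have hrexp {z : ℝ} (hz : z ∈ Ioi (log s)) : exp z ∈ Ici r :=
    hrs.trans ((log_lt_iff_lt_exp hs).1 hz).le
  rw [(hderiv x).deriv, (hderiv y).deriv]
  exact gaussIntElasticity_strictAntiOn hα hr hfr (hrexp hx) (hrexp hy) (exp_lt_exp.2 hxy)

lemma gaussInt_mul_lt_mul_of_mul_eq {α r s t u v : ℝ} (hα : 0 < α) (hr : 0 ≤ r)
    (hfr : f r α = 0) (hrs : r ≤ s) (hs : 0 < s) (hsu : s < u) (hut : u < t)
    (huv : u * v = s * t) : gaussInt α s * gaussInt α t < gaussInt α u * gaussInt α v := by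
  have hu : 0 < u := hs.trans hsu
  have ht : 0 < t := hu.trans hut
  have hv : 0 < v := pos_of_mul_pos_right (huv ▸ mul_pos hs ht) hu.le
  have hlog := (strictConcaveOn_log_gaussInt_exp hα hr hfr hrs hs).add_lt_add_of_add_eq
    (le_refl (log s)) (log_le_log hs (hsu.trans hut).le) (log_lt_log hs hsu) (log_lt_log hu hut)
    (by rw [← log_mul hu.ne' hv.ne', ← log_mul hs.ne' ht.ne', huv])
  simp only [exp_log hs, exp_log ht, exp_log hu, exp_log hv] at hlog
  have hG {z : ℝ} (hz : 0 < z) : 0 < gaussInt α z := gaussInt_pos hα hz.le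
  rwa [← log_mul (hG hs).ne' (hG ht).ne', ← log_mul (hG hu).ne' (hG hv).ne',
    log_lt_log_iff (mul_pos (hG hs) (hG ht)) (mul_pos (hG hu) (hG hv))] at hlog

lemma one_div_add_mul_phi_eq {d : ℝ} (hd : 0 < d) (σ x : ℝ) :
    1 / (d + 1) + d / (d + 1) * phi σ x =
      2 * d / ((d + 1) * √(2 * π)) * gaussInt (√(2 * π) / (2 * d)) (x / (2 * σ)) := by
  have : 0 < √(2 * π) := by positivity
  simp only [phi, gaussInt]
  field_simp

theorem stmt13_general (σ : ℝ) (hσ : 0 < σ) (d : ℕ) (hd : 1 ≤ d) (a b c δ : ℝ)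
    (ha : 0 < a) (hb : 0 < b) (hδ2 : δ ≤ 1)
    (hcond : c ^ 2 + b ^ 2 < δ * a ^ 2)
    (rα : ℝ) (hr0 : 0 ≤ rα) (hrz : f rα (Real.sqrt (2 * Real.pi) / (2 * d)) = 0)
    (hcondr : rα ≤ b / (2 * σ)) :
    (1 / ((d : ℝ) + 1) + (d : ℝ) / ((d : ℝ) + 1) * phi σ a) *
        (1 / ((d : ℝ) + 1) + (d : ℝ) / ((d : ℝ) + 1) * phi σ b) ≤
      (1 / ((d : ℝ) + 1) + (d : ℝ) / ((d : ℝ) + 1) * phi σ (Real.sqrt (c ^ 2 + b ^ 2))) *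
        (1 / ((d : ℝ) + 1) +
          (d : ℝ) / ((d : ℝ) + 1) * phi σ (a * b / Real.sqrt (c ^ 2 + b ^ 2))) ∧
    ((1 / ((d : ℝ) + 1) + (d : ℝ) / ((d : ℝ) + 1) * phi σ a) *
        (1 / ((d : ℝ) + 1) + (d : ℝ) / ((d : ℝ) + 1) * phi σ b) =
      (1 / ((d : ℝ) + 1) + (d : ℝ) / ((d : ℝ) + 1) * phi σ (Real.sqrt (c ^ 2 + b ^ 2))) *
        (1 / ((d : ℝ) + 1) +
          (d : ℝ) / ((d : ℝ) + 1) * phi σ (a * b / Real.sqrt (c ^ 2 + b ^ 2))) ↔ c = 0) := by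
  have hd₀ : (0 : ℝ) < d := by exact_mod_cast hd
  simp only [one_div_add_mul_phi_eq hd₀ σ]
  set C := 2 * (d : ℝ) / ((d + 1) * √(2 * π))
  set G := gaussInt (√(2 * π) / (2 * d))
  obtain rfl | hc := eq_or_ne c 0
  · rw [show √(0 ^ 2 + b ^ 2) = b by simp [hb.le], mul_div_cancel_right₀ a hb.ne']
    exact ⟨(mul_comm _ _).le, iff_of_true (mul_comm _ _) rfl⟩
  have h2σ : 0 < 2 * σ := by positivity
  have hbā : b < √(c ^ 2 + b ^ 2) :=
    (lt_sqrt hb.le).2 (lt_add_of_pos_left _ (pow_two_pos_of_ne_zero hc))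
  have hāa : √(c ^ 2 + b ^ 2) < a := (sqrt_lt' ha).2 (by nlinarith)
  have hkey : G (a / (2 * σ)) * G (b / (2 * σ)) <
      G (√(c ^ 2 + b ^ 2) / (2 * σ)) * G (a * b / √(c ^ 2 + b ^ 2) / (2 * σ)) :=
    (mul_comm _ _).trans_lt <| gaussInt_mul_lt_mul_of_mul_eq (by positivity) hr0 hrz hcondr
      (div_pos hb h2σ) (div_lt_div_of_pos_right hbā h2σ) (div_lt_div_of_pos_right hāa h2σ)
      (by field_simp)
  have hlt : C * G (a / (2 * σ)) * (C * G (b / (2 * σ))) <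
      C * G (√(c ^ 2 + b ^ 2) / (2 * σ)) * (C * G (a * b / √(c ^ 2 + b ^ 2) / (2 * σ))) := by
    have hC : 0 < C := by positivity
    linarith [mul_lt_mul_of_pos_left hkey (mul_pos hC hC)]
  exact ⟨hlt.le, iff_of_false hlt.ne hc⟩

theorem stmt13 (σ : ℝ) (hσ : 0 < σ) (d : ℕ) (hd : 1 ≤ d) (a b c δ : ℝ)
    (ha : 0 < a) (hb : 0 < b) (hδ1 : 1 / 4 < δ) (hδ2 : δ ≤ 1)
    (hcond : c ^ 2 + b ^ 2 < δ * a ^ 2)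
    (rα : ℝ) (hr0 : 0 ≤ rα) (hrz : f rα (Real.sqrt (2 * Real.pi) / (2 * d)) = 0)
    (hcondr : rα ≤ b / (2 * σ)) :
    (1 / ((d : ℝ) + 1) + (d : ℝ) / ((d : ℝ) + 1) * phi σ a) *
        (1 / ((d : ℝ) + 1) + (d : ℝ) / ((d : ℝ) + 1) * phi σ b) ≤
      (1 / ((d : ℝ) + 1) + (d : ℝ) / ((d : ℝ) + 1) * phi σ (Real.sqrt (c ^ 2 + b ^ 2))) *
        (1 / ((d : ℝ) + 1) +
          (d : ℝ) / ((d : ℝ) + 1) * phi σ (a * b / Real.sqrt (c ^ 2 + b ^ 2))) ∧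
    ((1 / ((d : ℝ) + 1) + (d : ℝ) / ((d : ℝ) + 1) * phi σ a) *
        (1 / ((d : ℝ) + 1) + (d : ℝ) / ((d : ℝ) + 1) * phi σ b) =
      (1 / ((d : ℝ) + 1) + (d : ℝ) / ((d : ℝ) + 1) * phi σ (Real.sqrt (c ^ 2 + b ^ 2))) *
        (1 / ((d : ℝ) + 1) +
          (d : ℝ) / ((d : ℝ) + 1) * phi σ (a * b / Real.sqrt (c ^ 2 + b ^ 2))) ↔ c = 0) :=
  stmt13_general σ hσ d hd a b c δ ha hb hδ2 hcond rα hr0 hrz hcondr
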